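/- arXiv:1009.3080 — 3 statements merged into one kernel-verified Lean document; each statement's English description precedes it below -/
import Mathlib

section
/- Let P be a finite collection of points in F^2 and L a finite collection of lines in F^2, where F is a finite field. Then the number of incidences |{(p,ℓ) ∈ P × L : p ∈ ℓ}| is at most |P|^{1/2}|L| + |P|. -/
open Finset

lemma line_mem_iff {F : Type} [Field F] (a : F × F) (b : F) (ha : a ≠ (0,0))
    (x y : F × F) (hxy : x ≠ y)
    (hx : a.1 * x.1 + a.2 * x.2 = b) (hy : a.1 * y.1 + a.2 * y.2 = b) (z : F × F) :
    (a.1 * z.1 + a.2 * z.2 = b) ↔ (y.1 - x.1) * (z.2 - x.2) = (y.2 - x.2) * (z.1 - x.1) := by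
  obtain ⟨a1, a2⟩ := a
  obtain ⟨x1, x2⟩ := x
  obtain ⟨y1, y2⟩ := y
  obtain ⟨z1, z2⟩ := z
  simp only at hx hy ⊢
  have hne : a1 ≠ 0 ∨ a2 ≠ 0 := by
    by_contra h; push_neg at h; exact ha (by simp [h.1, h.2])
  have hd : y1 - x1 ≠ 0 ∨ y2 - x2 ≠ 0 := by
    by_contra h; push_neg at h
    exact hxy (by simp [Prod.ext_iff, sub_eq_zero.1 h.1, sub_eq_zero.1 h.2])
  constructor
  · intro hz
    rcases hne with h | h
    · exact mul_left_cancel₀ h (show a1 * ((y1-x1)*(z2-x2)) = a1 * ((y2-x2)*(z1-x1)) by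
        linear_combination (z2 - x2) * hy - (y2 - x2) * hz + (y2 - z2) * hx)
    · exact mul_left_cancel₀ h (show a2 * ((y1-x1)*(z2-x2)) = a2 * ((y2-x2)*(z1-x1)) by
        linear_combination (x1 - z1) * hy + (y1 - x1) * hz + (z1 - y1) * hx)
  · intro hz
    rcases hd with h | h
    · exact mul_left_cancel₀ h (show (y1-x1) * (a1*z1 + a2*z2) = (y1-x1) * b by
        linear_combination (z1 - x1) * hy + (y1 - z1) * hx + a2 * hz)
    · exact mul_left_cancel₀ h (show (y2-x2) * (a1*z1 + a2*z2) = (y2-x2) * b by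
        linear_combination (z2 - x2) * hy + (y2 - z2) * hx - a1 * hz)

/-- Two distinct lines meet in at most one point of P. -/
lemma lines_meet_le_one {F : Type} [Field F] [DecidableEq F] (P : Finset (F × F))
    (ℓ ℓ' : Finset (F × F))
    (h1 : ∃ a : F × F, ∃ b : F, a ≠ (0, 0) ∧
      ∀ x : F × F, x ∈ ℓ ↔ a.1 * x.1 + a.2 * x.2 = b)
    (h2 : ∃ a : F × F, ∃ b : F, a ≠ (0, 0) ∧
      ∀ x : F × F, x ∈ ℓ' ↔ a.1 * x.1 + a.2 * x.2 = b)
    (hne : ℓ ≠ ℓ') :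
    (P.filter (fun p => p ∈ ℓ ∧ p ∈ ℓ')).card ≤ 1 := by
  obtain ⟨a, b, ha, hmem⟩ := h1
  obtain ⟨a', b', ha', hmem'⟩ := h2
  rw [Finset.card_le_one]
  intro x hx y hy
  simp only [Finset.mem_filter] at hx hy
  by_contra hxy
  apply hne
  ext z
  rw [hmem, hmem',
    line_mem_iff a b ha x y hxy ((hmem x).1 hx.2.1) ((hmem y).1 hy.2.1) z,
    ← line_mem_iff a' b' ha' x y hxy ((hmem' x).1 hx.2.2) ((hmem' y).1 hy.2.2) z]

/-- point-line incidence bound |I| ≤ |P|^{1/2}|L| + |P| over a finite field. -/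
theorem incidence_bound_one (F : Type) [Field F] [Fintype F] [DecidableEq F]
    (P : Finset (F × F)) (L : Finset (Finset (F × F)))
    (hL : ∀ ℓ ∈ L, ∃ a : F × F, ∃ b : F, a ≠ (0, 0) ∧
      ∀ x : F × F, x ∈ ℓ ↔ a.1 * x.1 + a.2 * x.2 = b) :
    (((P ×ˢ L).filter (fun q => q.1 ∈ q.2)).card : ℝ) ≤
      (P.card : ℝ) ^ ((1 : ℝ) / 2) * (L.card : ℝ) + (P.card : ℝ) := by
  classical
  let I : ℕ := ((P ×ˢ L).filter (fun q => q.1 ∈ q.2)).card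
  let d : F × F → ℕ := fun p => (L.filter (fun ℓ => p ∈ ℓ)).card
  -- incidences as a sum over points
  have h1 : I = ∑ p ∈ P, d p := by
    simp only [I, d, Finset.card_filter, Finset.sum_product]
  -- incidences as a sum over lines
  have h4 : I = ∑ ℓ ∈ L, (P.filter (fun p => p ∈ ℓ)).card := by
    simp only [I, Finset.card_filter, Finset.sum_product]
    rw [Finset.sum_comm]
  -- sum of squared degrees
  have h2 : ∑ p ∈ P, d p ^ 2
      = ∑ ℓ ∈ L, ∑ ℓ' ∈ L, (P.filter (fun p => p ∈ ℓ ∧ p ∈ ℓ')).card := by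
    simp only [d, Finset.card_filter, sq, Finset.sum_mul_sum, ite_mul, one_mul,
      zero_mul, ← ite_and]
    rw [Finset.sum_comm]
    refine Finset.sum_congr rfl fun ℓ _ => ?_
    rw [Finset.sum_comm]
  -- bound on the double sum
  have h3 : ∑ ℓ ∈ L, ∑ ℓ' ∈ L, (P.filter (fun p => p ∈ ℓ ∧ p ∈ ℓ')).card
      ≤ I + L.card * L.card := by
    have hb : ∀ ℓ ∈ L, ∑ ℓ' ∈ L, (P.filter (fun p => p ∈ ℓ ∧ p ∈ ℓ')).card
        ≤ (P.filter (fun p => p ∈ ℓ)).card + L.card := by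
      intro ℓ hℓ
      rw [← Finset.sum_erase_add _ _ hℓ]
      have : ∑ ℓ' ∈ L.erase ℓ, (P.filter (fun p => p ∈ ℓ ∧ p ∈ ℓ')).card
          ≤ ∑ _ℓ' ∈ L.erase ℓ, 1 := by
        refine Finset.sum_le_sum fun ℓ' hℓ' => ?_
        exact lines_meet_le_one P ℓ ℓ' (hL ℓ hℓ) (hL ℓ' (Finset.mem_of_mem_erase hℓ'))
          (Ne.symm (Finset.ne_of_mem_erase hℓ'))
      calc _ ≤ (∑ _ℓ' ∈ L.erase ℓ, 1) + (P.filter (fun p => p ∈ ℓ ∧ p ∈ ℓ)).card := by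
              exact Nat.add_le_add_right this _
        _ ≤ (P.filter (fun p => p ∈ ℓ)).card + L.card := by
              rw [Finset.sum_const, smul_eq_mul, mul_one]
              simp only [and_self]
              rw [add_comm]
              exact Nat.add_le_add_left Finset.card_erase_le _
    calc ∑ ℓ ∈ L, ∑ ℓ' ∈ L, (P.filter (fun p => p ∈ ℓ ∧ p ∈ ℓ')).card
        ≤ ∑ ℓ ∈ L, ((P.filter (fun p => p ∈ ℓ)).card + L.card) := Finset.sum_le_sum hb
      _ = (∑ ℓ ∈ L, (P.filter (fun p => p ∈ ℓ)).card) + L.card * L.card := by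
          rw [Finset.sum_add_distrib, Finset.sum_const, smul_eq_mul]
      _ = I + L.card * L.card := by rw [← h4]
  -- Cauchy-Schwarz
  have hCS : I ^ 2 ≤ P.card * ∑ p ∈ P, d p ^ 2 := by
    have := Finset.sum_mul_sq_le_sq_mul_sq (R := ℕ) P d (fun _ => 1)
    simp only [mul_one, one_pow, Finset.sum_const, smul_eq_mul, mul_one] at this
    rw [h1]
    calc (∑ p ∈ P, d p) ^ 2 ≤ (∑ p ∈ P, d p ^ 2) * P.card := this
      _ = P.card * ∑ p ∈ P, d p ^ 2 := mul_comm _ _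
  have hkey : (I : ℕ) ^ 2 ≤ P.card * (I + L.card * L.card) :=
    hCS.trans (Nat.mul_le_mul_left _ (h2 ▸ h3))
  -- pass to the reals
  have hkeyR : (I : ℝ) ^ 2 ≤ (P.card : ℝ) * ((I : ℝ) + (L.card : ℝ) * (L.card : ℝ)) := by
    exact_mod_cast hkey
  rw [show ((P.card : ℝ)) ^ ((1:ℝ)/2) = Real.sqrt (P.card) from (Real.sqrt_eq_rpow _).symm]
  set i := (I : ℝ)
  set p := ((P.card : ℕ) : ℝ)
  set l := ((L.card : ℕ) : ℝ)
  have hp : 0 ≤ p := Nat.cast_nonneg _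
  have hi : 0 ≤ i := Nat.cast_nonneg _
  have hl : 0 ≤ l := Nat.cast_nonneg _
  have hs : 0 ≤ Real.sqrt p := Real.sqrt_nonneg _
  have hs2 : Real.sqrt p ^ 2 = p := Real.sq_sqrt hp
  nlinarith [sq_nonneg (i - Real.sqrt p * l - p), sq_nonneg (i - Real.sqrt p * l),
    mul_nonneg hs hl, mul_nonneg (mul_nonneg hs hl) hi, mul_nonneg hp hi]
end

section
/- Let F be a finite field with −1 not a square, and let 𝒫 ⊆ F^3 be the paraboloid over F^2. For all subsets A, B ⊆ 𝒫 and every b ∈ 𝒫, the number of triples (a, d, c) ∈ A × B × 𝒫 with a − d = c − b is at most |A| + min(|A|^{1/2}|B| + |A|, |A||B|^{1/2} + |B|). -/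
/-!
Write `a = (α, |α|²)`, `d = (δ, |δ|²)`, `b = (β, |β|²)`. A triple is determined by `(a, d)`, and its
third entry `a - d + b` lies on `𝒫` iff `x · y = y · y` for `x = α - β`, `y = δ - β`, i.e. iff
the point `x` lies on the line `ℓ(y)` through `y` orthogonal to `y`. The pairs with `d = b` number
at most `|A|`. For `y ≠ 0` the lines `ℓ(y)` are distinct, and since `-1` is not a square (so `u² + v²`
is anisotropic) two of them meet in at most one point; for any incidence structure without such a "rectangle",
Cauchy–Schwarz bounds the number of incidences by `|P|^{1/2}|L| + |P|`, and by symmetry by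
`|P||L|^{1/2} + |L|`.
-/

open Finset

def paraboloid3 (F : Type) [Field F] : Set ((F × F) × F) :=
  {p | p.2 = p.1.1 ^ 2 + p.1.2 ^ 2}

lemma le_sqrt_mul_add_of_sq_le {x a b : ℝ} (ha : 0 ≤ a) (hb : 0 ≤ b)
    (h : x ^ 2 ≤ a * b ^ 2 + a * x) : x ≤ √a * b + a := by
  have hs : √a ^ 2 = a := Real.sq_sqrt ha
  nlinarith [Real.sqrt_nonneg a, mul_nonneg (Real.sqrt_nonneg a) hb]

section Incidence

variable {α β : Type*} (P : Finset α) (L : Finset β) (r : α → β → Prop)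

/-- The incidence graph contains no `K₂,₂`. -/
def RectangleFree : Prop :=
  ∀ p ∈ P, ∀ p' ∈ P, ∀ l ∈ L, ∀ l' ∈ L, r p l → r p' l → r p l' → r p' l' → p = p' ∨ l = l'

variable {P L r}

lemma RectangleFree.flip (h : RectangleFree P L r) : RectangleFree L P (fun l p => r p l) :=
  fun l hl l' hl' p hp p' hp' h₁ h₂ h₃ h₄ => (h p hp p' hp' l hl l' hl' h₁ h₃ h₂ h₄).symm

variable [∀ p l, Decidable (r p l)]

lemma card_filter_product_eq_sum_card_bipartiteAbove :
    #{q ∈ P ×ˢ L | r q.1 q.2} = ∑ p ∈ P, #(L.bipartiteAbove r p) := by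
  simp only [card_filter, sum_product, bipartiteAbove]

lemma card_filter_product_flip :
    #{q ∈ L ×ˢ P | r q.2 q.1} = #{q ∈ P ×ˢ L | r q.1 q.2} := by
  rw [card_filter_product_eq_sum_card_bipartiteAbove (r := fun l p => r p l),
    card_filter_product_eq_sum_card_bipartiteAbove]
  exact (sum_card_bipartiteAbove_eq_sum_card_bipartiteBelow r).symm

lemma RectangleFree.sum_sq_card_bipartiteAbove_le [DecidableEq β] (h : RectangleFree P L r) :
    ∑ p ∈ P, #(L.bipartiteAbove r p) ^ 2 ≤ #{q ∈ P ×ˢ L | r q.1 q.2} + #L ^ 2 := by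
  have hsq (p : α) :
      #(L.bipartiteAbove r p) ^ 2 =
        #((L ×ˢ L).bipartiteAbove (fun p q => r p q.1 ∧ r p q.2) p) := by
    rw [sq, ← card_product, bipartiteAbove, bipartiteAbove, filter_product]
  have hpair : ∀ q ∈ L ×ˢ L, #(P.bipartiteBelow (fun p q => r p q.1 ∧ r p q.2) q)
      ≤ (if q.1 = q.2 then #(P.bipartiteBelow r q.1) else 0) + 1 := by
    rintro ⟨l, l'⟩ hq
    rw [mem_product] at hq
    dsimp only at hq ⊢
    split_ifs with hll
    · subst hll
      exact (card_le_card fun p hp => by simp_all [bipartiteBelow]).trans (Nat.le_succ _)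
    · refine card_le_one.2 fun p hp p' hp' => ?_
      simp only [mem_bipartiteBelow] at hp hp'
      exact (h p hp.1 p' hp'.1 l hq.1 l' hq.2 hp.2.1 hp'.2.1 hp.2.2 hp'.2.2).resolve_right hll
  calc ∑ p ∈ P, #(L.bipartiteAbove r p) ^ 2
      = ∑ q ∈ L ×ˢ L, #(P.bipartiteBelow (fun p q => r p q.1 ∧ r p q.2) q) := by
        simp only [hsq]; exact sum_card_bipartiteAbove_eq_sum_card_bipartiteBelow _
    _ ≤ ∑ q ∈ L ×ˢ L, ((if q.1 = q.2 then #(P.bipartiteBelow r q.1) else 0) + 1) :=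
        sum_le_sum hpair
    _ = #{q ∈ P ×ˢ L | r q.1 q.2} + #L ^ 2 := by
        rw [sum_add_distrib, sum_product, card_filter_product_eq_sum_card_bipartiteAbove,
          sum_card_bipartiteAbove_eq_sum_card_bipartiteBelow]
        simp [sum_ite_eq, sq]

lemma RectangleFree.card_incidences_le [DecidableEq β] (h : RectangleFree P L r) :
    (#{q ∈ P ×ˢ L | r q.1 q.2} : ℝ) ≤ √(#P : ℝ) * #L + #P := by
  have hcs : (#{q ∈ P ×ˢ L | r q.1 q.2} : ℝ) ^ 2 ≤
      #P * ∑ p ∈ P, (#(L.bipartiteAbove r p) : ℝ) ^ 2 := by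
    rw [card_filter_product_eq_sum_card_bipartiteAbove, Nat.cast_sum]
    exact sq_sum_le_card_mul_sum_sq
  have hdeg :
      ∑ p ∈ P, (#(L.bipartiteAbove r p) : ℝ) ^ 2 ≤ #{q ∈ P ×ˢ L | r q.1 q.2} + #L ^ 2 := by
    exact_mod_cast h.sum_sq_card_bipartiteAbove_le
  refine le_sqrt_mul_add_of_sq_le (by positivity) (by positivity) ?_
  nlinarith [(Nat.cast_nonneg #P : (0 : ℝ) ≤ #P)]

lemma RectangleFree.card_incidences_le_min [DecidableEq α] [DecidableEq β]
    (h : RectangleFree P L r) :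
    (#{q ∈ P ×ˢ L | r q.1 q.2} : ℝ) ≤ min (√(#P : ℝ) * #L + #P) (#P * √(#L : ℝ) + #L) := by
  refine le_min h.card_incidences_le ?_
  rw [← card_filter_product_flip, mul_comm]
  exact h.flip.card_incidences_le

end Incidence

section Geometry

variable {F : Type} [Field F]

lemma two_ne_zero_of_not_sq_eq_neg_one (hsq : ¬ ∃ x : F, x ^ 2 = -1) : (2 : F) ≠ 0 :=
  fun h => hsq ⟨1, by linear_combination h⟩

lemma eq_zero_of_sq_add_sq_eq_zero (hsq : ¬ ∃ x : F, x ^ 2 = -1) {x y : F}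
    (h : x ^ 2 + y ^ 2 = 0) : x = 0 ∧ y = 0 := by
  by_cases hy : y = 0
  · subst hy
    exact ⟨pow_eq_zero_iff two_ne_zero |>.mp (by linear_combination h), rfl⟩
  · exact absurd ⟨x / y, by field_simp; linear_combination h⟩ hsq

def perpLine (y : F × F) : Set (F × F) :=
  {x | x.1 * y.1 + x.2 * y.2 = y.1 ^ 2 + y.2 ^ 2}

/-- `x - x'` is orthogonal to both `y` and `y'`, so these are parallel; then
`|y'|² = y · y' = |y|²`, hence `|y - y'|² = 0`. -/
lemma eq_of_mem_perpLine (hsq : ¬ ∃ x : F, x ^ 2 = -1) {x x' y y' : F × F} (hx : x ≠ x')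
    (hy : y ≠ 0) (hy' : y' ≠ 0) (hxy : x ∈ perpLine y) (hx'y : x' ∈ perpLine y)
    (hxy' : x ∈ perpLine y') (hx'y' : x' ∈ perpLine y') : y = y' := by
  obtain ⟨x₁, x₂⟩ := x
  obtain ⟨u₁, u₂⟩ := x'
  obtain ⟨y₁, y₂⟩ := y
  obtain ⟨z₁, z₂⟩ := y'
  simp only [perpLine, Set.mem_ofPred_eq] at hxy hx'y hxy' hx'y'
  have hdet : y₁ * z₂ - y₂ * z₁ = 0 := by
    rcases not_and_or.mp (fun h => hx (Prod.ext h.1 h.2)) with h₁ | h₂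
    · refine (mul_eq_zero.mp ?_).resolve_left (sub_ne_zero.mpr h₁)
      linear_combination z₂ * (hxy - hx'y) - y₂ * (hxy' - hx'y')
    · refine (mul_eq_zero.mp ?_).resolve_left (sub_ne_zero.mpr h₂)
      linear_combination y₁ * (hxy' - hx'y') - z₁ * (hxy - hx'y)
  have hnorm {a b : F} (h : (a, b) ≠ 0) : a ^ 2 + b ^ 2 ≠ 0 := fun h' =>
    h (Prod.ext (eq_zero_of_sq_add_sq_eq_zero hsq h').1 (eq_zero_of_sq_add_sq_eq_zero hsq h').2)
  have hz_dot : z₁ ^ 2 + z₂ ^ 2 = y₁ * z₁ + y₂ * z₂ := by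
    refine sub_eq_zero.mp ((mul_eq_zero.mp ?_).resolve_left (hnorm hy))
    linear_combination (y₁ * z₁ + y₂ * z₂) * hxy - (y₁ ^ 2 + y₂ ^ 2) * hxy' +
      (x₂ * y₁ - x₁ * y₂) * hdet
  have hy_dot : y₁ ^ 2 + y₂ ^ 2 = y₁ * z₁ + y₂ * z₂ := by
    refine sub_eq_zero.mp ((mul_eq_zero.mp ?_).resolve_left (hnorm hy'))
    linear_combination (y₁ * z₁ + y₂ * z₂) * hxy' - (z₁ ^ 2 + z₂ ^ 2) * hxy -
      (x₂ * z₁ - x₁ * z₂) * hdet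
  obtain ⟨h₁, h₂⟩ := eq_zero_of_sq_add_sq_eq_zero hsq (x := y₁ - z₁) (y := y₂ - z₂)
    (by linear_combination hy_dot + hz_dot)
  exact Prod.ext (sub_eq_zero.mp h₁) (sub_eq_zero.mp h₂)

lemma paraboloid3_injOn_fst : Set.InjOn Prod.fst (paraboloid3 F) :=
  fun p hp q hq h => Prod.ext h (by rw [hp, hq, h])

lemma sub_add_mem_paraboloid3_iff (h2 : (2 : F) ≠ 0) {a d b : (F × F) × F}
    (ha : a ∈ paraboloid3 F) (hd : d ∈ paraboloid3 F) (hb : b ∈ paraboloid3 F) :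
    a - d + b ∈ paraboloid3 F ↔ a.1 - b.1 ∈ perpLine (d.1 - b.1) := by
  simp only [paraboloid3, perpLine, Set.mem_ofPred_eq, Prod.fst_add, Prod.fst_sub, Prod.snd_add,
    Prod.snd_sub] at *
  rw [ha, hd, hb]
  constructor
  · intro h
    exact mul_left_cancel₀ h2 (by linear_combination h)
  · intro h
    linear_combination 2 * h

end Geometry

lemma ncard_sub_eq_sub_eq_ncard_pairs {G : Type*} [AddCommGroup G] (A B S : Set G) (b : G) :
    {q : G × G × G | q.1 ∈ A ∧ q.2.1 ∈ B ∧ q.2.2 ∈ S ∧ q.1 - q.2.1 = q.2.2 - b}.ncard =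
      {p : G × G | p.1 ∈ A ∧ p.2 ∈ B ∧ p.1 - p.2 + b ∈ S}.ncard := by
  have hinj : Function.Injective fun p : G × G => (p.1, p.2, p.1 - p.2 + b) :=
    fun p q h => Prod.ext (congrArg (·.1) h) (congrArg (·.2.1) h)
  rw [← Set.ncard_image_of_injective _ hinj]
  congr 1
  ext ⟨a, d, c⟩
  simp only [Set.mem_image, Set.mem_ofPred_eq, Prod.mk.injEq, Prod.exists]
  constructor
  · rintro ⟨ha, hd, hc, h⟩
    exact ⟨a, d, ⟨ha, hd, by rwa [h, sub_add_cancel]⟩, rfl, rfl, by rw [h, sub_add_cancel]⟩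
  · rintro ⟨a, d, ⟨ha, hd, hc⟩, rfl, rfl, rfl⟩
    exact ⟨ha, hd, hc, (add_sub_cancel_right _ _).symm⟩

section Paraboloid

variable {F : Type} [Field F]

lemma rectangleFree_perpLine (hsq : ¬ ∃ x : F, x ^ 2 = -1) {P L : Finset ((F × F) × F)}
    (hP : ↑P ⊆ paraboloid3 F) (hL : ↑L ⊆ paraboloid3 F) {b : (F × F) × F}
    (hb : b ∈ paraboloid3 F) (hbL : b ∉ L) :
    RectangleFree P L fun a d => a.1 - b.1 ∈ perpLine (d.1 - b.1) := by
  intro p hp p' hp' l hl l' hl' h₁ h₂ h₃ h₄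
  have hne {q : (F × F) × F} (hq : q ∈ L) : q.1 - b.1 ≠ 0 := fun h =>
    hbL (paraboloid3_injOn_fst (hL hq) hb (sub_eq_zero.mp h) ▸ hq)
  refine or_iff_not_imp_left.mpr fun hpp => paraboloid3_injOn_fst (hL hl) (hL hl') ?_
  refine sub_left_injective
    (eq_of_mem_perpLine hsq (fun h => hpp ?_) (hne hl) (hne hl') h₁ h₂ h₃ h₄)
  exact paraboloid3_injOn_fst (hP hp) (hP hp') (sub_left_injective h)

open Classical in
lemma ncard_sub_add_mem_paraboloid3_le [Fintype F] (hsq : ¬ ∃ x : F, x ^ 2 = -1)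
    {A B : Set ((F × F) × F)} (hA : A ⊆ paraboloid3 F) (hB : B ⊆ paraboloid3 F)
    {b : (F × F) × F} (hb : b ∈ paraboloid3 F) :
    {p : ((F × F) × F) × ((F × F) × F) |
        p.1 ∈ A ∧ p.2 ∈ B ∧ p.1 - p.2 + b ∈ paraboloid3 F}.ncard ≤
      A.ncard +
        #{q ∈ A.toFinset ×ˢ B.toFinset.erase b | q.1.1 - b.1 ∈ perpLine (q.2.1 - b.1)} := by
  calc _ ≤ (A ×ˢ {b} ∪
        ↑{q ∈ A.toFinset ×ˢ B.toFinset.erase b | q.1.1 - b.1 ∈ perpLine (q.2.1 - b.1)}).ncard := by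
        refine Set.ncard_le_ncard (fun p ⟨ha, hd, hc⟩ => ?_)
        by_cases hpb : p.2 = b
        · exact Or.inl ⟨ha, hpb⟩
        · refine Or.inr ?_
          simp only [coe_filter, mem_product, Set.mem_toFinset, mem_erase]
          have h2 := two_ne_zero_of_not_sq_eq_neg_one hsq
          exact ⟨⟨ha, hpb, hd⟩, (sub_add_mem_paraboloid3_iff h2 (hA ha) (hB hd) hb).mp hc⟩
    _ ≤ _ := by
        refine (Set.ncard_union_le _ _).trans ?_
        rw [Set.ncard_prod, Set.ncard_singleton, mul_one, Set.ncard_coe_finset]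

end Paraboloid

theorem triple_count_bound_general (F : Type) [Field F] [Fintype F]
    (hsq : ¬ ∃ x : F, x ^ 2 = -1)
    (A B : Set ((F × F) × F))
    (hA : A ⊆ paraboloid3 F) (hB : B ⊆ paraboloid3 F)
    (b : (F × F) × F) (hb : b ∈ paraboloid3 F) :
    (({q : ((F × F) × F) × ((F × F) × F) × ((F × F) × F) |
        q.1 ∈ A ∧ q.2.1 ∈ B ∧ q.2.2 ∈ paraboloid3 F ∧
          q.1 - q.2.1 = q.2.2 - b}).ncard : ℝ) ≤
      (A.ncard : ℝ) +
        min ((A.ncard : ℝ) ^ ((1 : ℝ) / 2) * (B.ncard : ℝ) + (A.ncard : ℝ))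
          ((A.ncard : ℝ) * (B.ncard : ℝ) ^ ((1 : ℝ) / 2) + (B.ncard : ℝ)) := by
  classical
  have hfree := rectangleFree_perpLine hsq (P := A.toFinset) (L := B.toFinset.erase b)
    (by simpa using hA) (fun d hd => hB (by simpa using (mem_erase.mp hd).2)) hb (notMem_erase b _)
  have hP : (#A.toFinset : ℝ) = A.ncard := by rw [Set.ncard_eq_toFinset_card']
  have hL : (#(B.toFinset.erase b) : ℝ) ≤ B.ncard := by
    rw [Set.ncard_eq_toFinset_card']; exact_mod_cast card_erase_le
  rw [ncard_sub_eq_sub_eq_ncard_pairs]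
  simp only [← Real.sqrt_eq_rpow]
  calc _ ≤ (A.ncard : ℝ) + #{q ∈ A.toFinset ×ˢ B.toFinset.erase b |
        q.1.1 - b.1 ∈ perpLine (q.2.1 - b.1)} := by
        exact_mod_cast ncard_sub_add_mem_paraboloid3_le hsq hA hB hb
    _ ≤ _ := by
        grw [hfree.card_incidences_le_min, hP, hL]

/-- for A, B ⊆ 𝒫 ⊆ F³ and b ∈ 𝒫,
#{(a,d,c) ∈ A × B × 𝒫 : a − d = c − b} ≤ |A| + min(|A|^{1/2}|B| + |A|, |A||B|^{1/2} + |B|). -/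
theorem triple_count_bound (F : Type) [Field F] [Fintype F]
    (hchar : ringChar F ≠ 2) (hsq : ¬ ∃ x : F, x ^ 2 = -1)
    (A B : Set ((F × F) × F))
    (hA : A ⊆ paraboloid3 F) (hB : B ⊆ paraboloid3 F)
    (b : (F × F) × F) (hb : b ∈ paraboloid3 F) :
    (({q : ((F × F) × F) × ((F × F) × F) × ((F × F) × F) |
        q.1 ∈ A ∧ q.2.1 ∈ B ∧ q.2.2 ∈ paraboloid3 F ∧
          q.1 - q.2.1 = q.2.2 - b}).ncard : ℝ) ≤
      (A.ncard : ℝ) +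
        min ((A.ncard : ℝ) ^ ((1 : ℝ) / 2) * (B.ncard : ℝ) + (A.ncard : ℝ))
          ((A.ncard : ℝ) * (B.ncard : ℝ) ^ ((1 : ℝ) / 2) + (B.ncard : ℝ)) :=
  triple_count_bound_general F hsq A B hA hB b hb
end

section
/- Let F be a finite field with −1 not a square, and 𝒫 ⊆ F^3 the paraboloid. For all A, B ⊆ 𝒫, the number of additive quadruples |{(a,b,c,d) ∈ A × B × A × B : a + b = c + d}| is at most 2·min(|A|^{1/2}|B|^2 + |A||B|, |A||B|^{3/2} + |B|^2). -/
open Finset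

section FiberCounting

variable {ι κ μ : Type*} [DecidableEq κ] {W : Finset ι} {X : Finset κ}
  {f : ι → κ}

theorem Finset.card_sq_le_card_mul_card_filter_fiber (hf : Set.MapsTo f W X) :
    #W ^ 2 ≤ #X * #{p ∈ W ×ˢ W | f p.1 = f p.2} := by
  have hpairs : Set.MapsTo (fun p : ι × ι ↦ f p.1) ({p ∈ W ×ˢ W | f p.1 = f p.2} : Finset _) X :=
    fun p hp ↦ hf (mem_product.mp (mem_filter.mp hp).1).1
  calc #W ^ 2 = (∑ x ∈ X, #{w ∈ W | f w = x}) ^ 2 := by rw [← card_eq_sum_card_fiberwise hf]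
    _ ≤ #X * ∑ x ∈ X, #{w ∈ W | f w = x} ^ 2 := sq_sum_le_card_mul_sum_sq
    _ = #X * #{p ∈ W ×ˢ W | f p.1 = f p.2} := by
      rw [card_eq_sum_card_fiberwise hpairs]
      congr 1
      refine sum_congr rfl fun x _ ↦ ?_
      rw [sq, ← card_product]
      congr 1
      ext p
      simp only [mem_product, mem_filter]
      constructor
      · rintro ⟨⟨h₁, rfl⟩, h₂, h⟩; exact ⟨⟨⟨h₁, h₂⟩, h.symm⟩, rfl⟩
      · rintro ⟨⟨⟨h₁, h₂⟩, h⟩, rfl⟩; exact ⟨⟨h₁, rfl⟩, h₂, h.symm⟩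

theorem Finset.card_sq_le_card_mul_add_of_injOn [DecidableEq ι] {Y : Finset μ} (g : ι × ι → μ)
    (hf : Set.MapsTo f W X) (hgY : Set.MapsTo g {p ∈ W.offDiag | f p.1 = f p.2} Y)
    (hg : Set.InjOn g {p ∈ W.offDiag | f p.1 = f p.2}) :
    #W ^ 2 ≤ #X * (#W + #Y) := by
  have hoff : #{p ∈ W.offDiag | f p.1 = f p.2} ≤ #Y :=
    card_le_card_of_injOn g (by simpa using hgY) (by simpa using hg)
  have hsplit : #{p ∈ W ×ˢ W | f p.1 = f p.2} ≤ #W + #{p ∈ W.offDiag | f p.1 = f p.2} := by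
    rw [← diag_union_offDiag, filter_union]
    exact (card_union_le _ _).trans (by grw [card_filter_le, diag_card])
  calc #W ^ 2 ≤ #X * #{p ∈ W ×ˢ W | f p.1 = f p.2} := card_sq_le_card_mul_card_filter_fiber hf
    _ ≤ #X * (#W + #Y) := by gcongr; omega

end FiberCounting

section LinkGraphs

variable {α : Type*} [DecidableEq α] (R : α → α → α → Prop) [∀ a b d, Decidable (R a b d)]

/-- For each `b ∈ B`, the bipartite graph `a ∼ d :↔ R a b d` between `A` and `B \ {b}` has no
four-cycle. -/
def C4FreeLinks (A B : Set α) : Prop :=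
  ∀ ⦃a a' b d d' : α⦄, a ∈ A → a' ∈ A → b ∈ B → d ∈ B → d' ∈ B → d ≠ b → d' ≠ b →
    R a b d → R a b d' → R a' b d → R a' b d' → a = a' ∨ d = d'

def offDiagTriples (A B : Finset α) : Finset ((α × α) × α) :=
  {x ∈ (A ×ˢ B) ×ˢ B | R x.1.1 x.1.2 x.2 ∧ x.2 ≠ x.1.2}

variable {R} {A B : Finset α}

@[simp]
theorem mem_offDiagTriples {a b d : α} :
    ((a, b), d) ∈ offDiagTriples R A B ↔ a ∈ A ∧ b ∈ B ∧ d ∈ B ∧ R a b d ∧ d ≠ b := by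
  simp [offDiagTriples, and_assoc]

theorem card_offDiagTriples_sq_le_fst (hR : C4FreeLinks R A B) :
    #(offDiagTriples R A B) ^ 2 ≤ #A * #B * (#(offDiagTriples R A B) + #B ^ 3) := by
  have h := card_sq_le_card_mul_add_of_injOn (W := offDiagTriples R A B) (X := A ×ˢ B)
    (Y := B ×ˢ B ×ˢ B) (f := Prod.fst) (fun p ↦ (p.1.1.2, p.1.2, p.2.2)) ?_ ?_ ?_
  · rw [card_product, card_product, card_product] at h
    convert h using 4; ring
  · rintro ⟨⟨a, b⟩, d⟩ hx
    simp_all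
  · rintro ⟨⟨⟨a, b⟩, d⟩, ⟨⟨a₂, b₂⟩, d₂⟩⟩ hp
    simp_all
  · rintro ⟨⟨⟨a, b⟩, d⟩, ⟨⟨a₂, b₂⟩, d'⟩⟩ hp ⟨⟨⟨a', b'⟩, e⟩, ⟨⟨a'₂, b'₂⟩, e'⟩⟩ hq hg
    simp only [Set.mem_ofPred_eq, mem_offDiag, mem_offDiagTriples, Prod.mk.injEq] at hp hq hg
    obtain ⟨rfl, rfl, rfl⟩ := hg
    obtain ⟨⟨⟨ha, hb, hd, hRd, hdb⟩, ⟨-, -, hd', hRd', hd'b⟩, hne⟩, rfl, rfl⟩ := hp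
    obtain ⟨⟨⟨ha', -, -, hR'd, -⟩, ⟨-, -, -, hR'd', -⟩, -⟩, rfl, rfl⟩ := hq
    obtain rfl := (hR ha ha' hb hd hd' hdb hd'b hRd hRd' hR'd hR'd').resolve_right (by grind)
    rfl

theorem card_offDiagTriples_sq_le_snd (hR : C4FreeLinks R A B) :
    #(offDiagTriples R A B) ^ 2 ≤ #B ^ 2 * (#(offDiagTriples R A B) + #B * #A ^ 2) := by
  have h := card_sq_le_card_mul_add_of_injOn (W := offDiagTriples R A B) (X := B ×ˢ B)
    (Y := B ×ˢ A ×ˢ A) (f := fun x ↦ (x.1.2, x.2)) (fun p ↦ (p.1.1.2, p.1.1.1, p.2.1.1))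
    ?_ ?_ ?_
  · rw [card_product, card_product, card_product] at h
    convert h using 4 <;> ring
  · rintro ⟨⟨a, b⟩, d⟩ hx
    simp_all
  · rintro ⟨⟨⟨a, b⟩, d⟩, ⟨⟨a₂, b₂⟩, d₂⟩⟩ hp
    simp_all
  · rintro ⟨⟨⟨a, b⟩, d⟩, ⟨⟨a', b₂⟩, d₂⟩⟩ hp ⟨⟨⟨a₃, b₃⟩, d'⟩, ⟨⟨a'₃, b'₃⟩, d'₃⟩⟩ hq hg
    simp only [Set.mem_ofPred_eq, mem_offDiag, mem_offDiagTriples, Prod.mk.injEq] at hp hq hg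
    obtain ⟨rfl, rfl, rfl⟩ := hg
    obtain ⟨⟨⟨ha, hb, hd, hRd, hdb⟩, ⟨ha', -, -, hR'd, -⟩, hne⟩, rfl, rfl⟩ := hp
    obtain ⟨⟨⟨-, -, hd', hRd', hd'b⟩, ⟨-, -, -, hR'd', -⟩, -⟩, rfl, rfl⟩ := hq
    obtain rfl := (hR ha ha' hb hd hd' hdb hd'b hRd hRd' hR'd hR'd').resolve_left (by grind)
    rfl

end LinkGraphs

section AdditiveQuadruples

variable {α : Type*} [AddCommGroup α] [DecidableEq α] {R : α → α → α → Prop}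
  [∀ a b d, Decidable (R a b d)]

theorem ncard_addQuadruples_le {A B : Finset α} (hR : ∀ a b d, a + b - d ∈ A → R a b d) :
    {q : (α × α) × (α × α) | q.1.1 ∈ A ∧ q.1.2 ∈ B ∧ q.2.1 ∈ A ∧ q.2.2 ∈ B ∧
        q.1.1 + q.1.2 = q.2.1 + q.2.2}.ncard ≤ #A * #B + #(offDiagTriples R A B) := by
  set Q := {q : (α × α) × (α × α) | q.1.1 ∈ A ∧ q.1.2 ∈ B ∧ q.2.1 ∈ A ∧ q.2.2 ∈ B ∧
    q.1.1 + q.1.2 = q.2.1 + q.2.2}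
  have hQ : Q.ncard ≤ #{x ∈ (A ×ˢ B) ×ˢ B | R x.1.1 x.1.2 x.2} := by
    rw [← Set.ncard_coe_finset]
    refine Set.ncard_le_ncard_of_injOn (fun q ↦ ((q.1.1, q.1.2), q.2.2)) ?_ ?_
    · rintro ⟨⟨a, b⟩, c, d⟩ ⟨ha, hb, hc, hd, habcd⟩
      have : a + b - d = c := by rw [habcd]; abel
      simp [ha, hb, hd, hR a b d (this ▸ hc)]
    · rintro ⟨⟨a, b⟩, c, d⟩ ⟨-, -, -, -, h⟩ ⟨⟨a', b'⟩, c', d'⟩ ⟨-, -, -, -, h'⟩ he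
      simp only [Prod.mk.injEq] at he
      obtain ⟨⟨rfl, rfl⟩, rfl⟩ := he
      simp only [Prod.mk.injEq, true_and, and_true]
      exact add_right_cancel (h.symm.trans h')
  have hdiag : #{x ∈ (A ×ˢ B) ×ˢ B | R x.1.1 x.1.2 x.2 ∧ x.2 = x.1.2} ≤ #A * #B := by
    rw [← card_product]
    refine card_le_card_of_injOn Prod.fst (fun x hx ↦ by simp_all) fun x hx y hy h ↦ ?_
    simp only [coe_filter, Set.mem_ofPred_eq] at hx hy
    exact Prod.ext h (by rw [hx.2.2, hy.2.2, h])
  rw [← card_filter_add_card_filter_not (fun x ↦ x.2 = x.1.2), filter_filter,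
    filter_filter] at hQ
  simp only [offDiagTriples, ne_eq]
  omega

end AdditiveQuadruples

section ThalesCircles

variable {F : Type*} [Field F]

theorem sq_add_sq_ne_zero_of_not_exists_sq_eq_neg_one (hsq : ¬ ∃ x : F, x ^ 2 = -1) {x y : F}
    (hxy : x ≠ 0 ∨ y ≠ 0) : x ^ 2 + y ^ 2 ≠ 0 := by
  intro h
  by_cases hy : y = 0
  · subst hy
    have hx : x = 0 := pow_eq_zero_iff two_ne_zero |>.mp (by simpa using h)
    exact hxy.elim (· hx) (· rfl)
  · exact hsq ⟨x / y, by field_simp; linear_combination h⟩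

def OnThalesCircle (a b d : F × F) : Prop :=
  (d.1 - a.1) * (d.1 - b.1) + (d.2 - a.2) * (d.2 - b.2) = 0

-- A point `e ≠ b` on both circles lies on their radical axis, the line through `b` orthogonal to
-- `a' - a`, which meets each circle in exactly one further point.
theorem smul_sub_eq_of_onThalesCircle {a a' b e : F × F}
    (hN : (a'.1 - a.1) ^ 2 + (a'.2 - a.2) ^ 2 ≠ 0) (he : e ≠ b) (h : OnThalesCircle a b e)
    (h' : OnThalesCircle a' b e) :
    ((a'.1 - a.1) ^ 2 + (a'.2 - a.2) ^ 2) • (e - b) =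
      ((b.2 - a.2) * (a'.1 - a.1) - (b.1 - a.1) * (a'.2 - a.2)) • (a'.2 - a.2, a.1 - a'.1) := by
  obtain ⟨a₁, a₂⟩ := a
  obtain ⟨a'₁, a'₂⟩ := a'
  obtain ⟨b₁, b₂⟩ := b
  obtain ⟨e₁, e₂⟩ := e
  simp only [OnThalesCircle] at h h'
  simp only [Prod.ext_iff, Prod.smul_fst, Prod.smul_snd, Prod.fst_sub, Prod.snd_sub,
    smul_eq_mul]
  set w₁ := a'₁ - a₁
  set w₂ := a'₂ - a₂
  set N := w₁ ^ 2 + w₂ ^ 2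
  set κ := (b₂ - a₂) * w₁ - (b₁ - a₁) * w₂
  set σ := w₁ * (e₂ - b₂) - w₂ * (e₁ - b₁)
  have horth : w₁ * (e₁ - b₁) + w₂ * (e₂ - b₂) = 0 := by linear_combination h - h'
  have hu₁ : N * (e₁ - b₁) = -σ * w₂ := by linear_combination w₁ * horth
  have hu₂ : N * (e₂ - b₂) = σ * w₁ := by linear_combination w₂ * horth
  -- `N² · h`, with `N • (e - b)` replaced by `σ • (-w₂, w₁)`
  have hσ : σ * (σ + κ) * N = 0 := by
    linear_combination N ^ 2 * h - (w₁ * (N * (e₁ - b₁) - σ * w₂ + N * (b₁ - a₁))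
      + w₂ * (N * (e₂ - b₂) + σ * w₁ + N * (b₂ - a₂))) * horth
  have hσ₀ : σ ≠ 0 := by
    rintro hσ₀
    rw [hσ₀, neg_zero, zero_mul] at hu₁
    rw [hσ₀, zero_mul] at hu₂
    exact he (Prod.ext (sub_eq_zero.mp ((mul_eq_zero.mp hu₁).resolve_left hN))
      (sub_eq_zero.mp ((mul_eq_zero.mp hu₂).resolve_left hN)))
  have hσκ : σ = -κ := by
    linear_combination (mul_eq_zero.mp ((mul_eq_zero.mp hσ).resolve_right hN)).resolve_left hσ₀
  exact ⟨by linear_combination hu₁ - w₂ * hσκ, by linear_combination hu₂ + w₁ * hσκ⟩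

theorem eq_or_eq_of_onThalesCircle (hsq : ¬ ∃ x : F, x ^ 2 = -1) {a a' b d d' : F × F}
    (hd : d ≠ b) (hd' : d' ≠ b) (h₁ : OnThalesCircle a b d) (h₂ : OnThalesCircle a b d')
    (h₃ : OnThalesCircle a' b d) (h₄ : OnThalesCircle a' b d') : a = a' ∨ d = d' := by
  refine or_iff_not_imp_left.mpr fun ha ↦ ?_
  have hN : (a'.1 - a.1) ^ 2 + (a'.2 - a.2) ^ 2 ≠ 0 :=
    sq_add_sq_ne_zero_of_not_exists_sq_eq_neg_one hsq (by
      by_contra! h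
      exact ha (Prod.ext (sub_eq_zero.mp h.1).symm (sub_eq_zero.mp h.2).symm))
  have h := (smul_sub_eq_of_onThalesCircle hN hd h₁ h₃).trans
    (smul_sub_eq_of_onThalesCircle hN hd' h₂ h₄).symm
  exact sub_left_injective (smul_right_injective _ hN h)

end ThalesCircles

section Paraboloid

variable {F : Type} [Field F] {a b d : (F × F) × F}

theorem mem_paraboloid3 : a ∈ paraboloid3 F ↔ a.2 = a.1.1 ^ 2 + a.1.2 ^ 2 := Iff.rfl

theorem paraboloid3_ext (ha : a ∈ paraboloid3 F) (hb : b ∈ paraboloid3 F) (h : a.1 = b.1) :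
    a = b :=
  Prod.ext h (by rw [mem_paraboloid3.mp ha, mem_paraboloid3.mp hb, h])

theorem onThalesCircle_of_add_sub_mem_paraboloid3 (hchar : ringChar F ≠ 2)
    (ha : a ∈ paraboloid3 F) (hb : b ∈ paraboloid3 F) (hd : d ∈ paraboloid3 F)
    (h : a + b - d ∈ paraboloid3 F) : OnThalesCircle a.1 b.1 d.1 := by
  rw [mem_paraboloid3] at ha hb hd h
  simp only [Prod.fst_add, Prod.snd_add, Prod.fst_sub, Prod.snd_sub] at h
  have h2 : (2 : F) * ((d.1.1 - a.1.1) * (d.1.1 - b.1.1) + (d.1.2 - a.1.2) * (d.1.2 - b.1.2))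
      = 0 := by
    linear_combination ha + hb - hd - h
  exact (mul_eq_zero.mp h2).resolve_left (Ring.two_ne_zero hchar)

theorem c4FreeLinks_paraboloid3 (hchar : ringChar F ≠ 2) (hsq : ¬ ∃ x : F, x ^ 2 = -1)
    {A B : Set ((F × F) × F)} (hA : A ⊆ paraboloid3 F) (hB : B ⊆ paraboloid3 F) :
    C4FreeLinks (fun a b d ↦ a + b - d ∈ paraboloid3 F) A B := by
  intro a a' b d d' ha ha' hb hd hd' hdb hd'b h₁ h₂ h₃ h₄
  have thales {a d} (ha : a ∈ A) (hd : d ∈ B) (h : a + b - d ∈ paraboloid3 F) :=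
    onThalesCircle_of_add_sub_mem_paraboloid3 hchar (hA ha) (hB hb) (hB hd) h
  refine (eq_or_eq_of_onThalesCircle hsq ?_ ?_ (thales ha hd h₁) (thales ha hd' h₂)
    (thales ha' hd h₃) (thales ha' hd' h₄)).imp (paraboloid3_ext (hA ha) (hA ha'))
    (paraboloid3_ext (hB hd) (hB hd'))
  · exact fun h ↦ hdb (paraboloid3_ext (hB hd) (hB hb) h)
  · exact fun h ↦ hd'b (paraboloid3_ext (hB hd') (hB hb) h)

end Paraboloid

theorem le_add_sqrt_mul_of_sq_le_mul_add {t m c : ℝ} (hm : 0 ≤ m) (hc : 0 ≤ c)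
    (h : t ^ 2 ≤ m * (t + c)) : t ≤ m + √(m * c) := by
  have hs : √(m * c) ^ 2 = m * c := Real.sq_sqrt (by positivity)
  nlinarith [Real.sqrt_nonneg (m * c), mul_nonneg hm (Real.sqrt_nonneg (m * c))]

theorem natCast_le_mul_sqrt (n : ℕ) : (n : ℝ) ≤ n * √n := by
  rcases n.eq_zero_or_pos with rfl | hn
  · simp
  · exact le_mul_of_one_le_right n.cast_nonneg (Real.one_le_sqrt.mpr (by exact_mod_cast hn))

theorem quadruple_bound_of_sq_le {E x y t : ℕ} (hE : E ≤ x * y + t)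
    (h₁ : t ^ 2 ≤ x * y * (t + y ^ 3)) (h₂ : t ^ 2 ≤ y ^ 2 * (t + y * x ^ 2)) :
    (E : ℝ) ≤ 2 * min ((x : ℝ) ^ ((1 : ℝ) / 2) * (y : ℝ) ^ 2 + x * y)
      (x * (y : ℝ) ^ ((3 : ℝ) / 2) + (y : ℝ) ^ 2) := by
  have hx : (0 : ℝ) ≤ x := x.cast_nonneg
  have hy : (0 : ℝ) ≤ y := y.cast_nonneg
  have hE' : (E : ℝ) ≤ x * y + t := by exact_mod_cast hE
  have ht₁ : (t : ℝ) ≤ x * y + √x * y ^ 2 := by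
    have := le_add_sqrt_mul_of_sq_le_mul_add (by positivity) (by positivity)
      (show (t : ℝ) ^ 2 ≤ x * y * (t + y ^ 3) by exact_mod_cast h₁)
    rwa [show (x : ℝ) * y * y ^ 3 = x * (y ^ 2) ^ 2 by ring, Real.sqrt_mul hx,
      Real.sqrt_sq (by positivity)] at this
  have ht₂ : (t : ℝ) ≤ y ^ 2 + x * y * √y := by
    have := le_add_sqrt_mul_of_sq_le_mul_add (by positivity) (by positivity)
      (show (t : ℝ) ^ 2 ≤ y ^ 2 * (t + y * x ^ 2) by exact_mod_cast h₂)
    rwa [show (y : ℝ) ^ 2 * (y * x ^ 2) = (x * y) ^ 2 * y by ring,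
      Real.sqrt_mul (by positivity), Real.sqrt_sq (by positivity)] at this
  have hxy : (x : ℝ) * y ≤ x * y * √y := by
    rw [mul_assoc]; exact mul_le_mul_of_nonneg_left (natCast_le_mul_sqrt y) hx
  rw [← Real.sqrt_eq_rpow, show (3 : ℝ) / 2 = 1 + 1 / 2 by norm_num,
    Real.rpow_add' hy (by norm_num), Real.rpow_one, ← Real.sqrt_eq_rpow,
    mul_min_of_nonneg _ _ two_pos.le]
  refine le_min ?_ ?_
  · nlinarith [mul_nonneg (Real.sqrt_nonneg (x : ℝ)) (sq_nonneg (y : ℝ))]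
  · nlinarith

/-- for A, B ⊆ 𝒫 ⊆ F³, the number of additive quadruples
(a,b,c,d) ∈ A × B × A × B with a + b = c + d is at most
2·min(|A|^{1/2}|B|² + |A||B|, |A||B|^{3/2} + |B|²). -/
theorem quadruple_count_bound (F : Type) [Field F] [Fintype F]
    (hchar : ringChar F ≠ 2) (hsq : ¬ ∃ x : F, x ^ 2 = -1)
    (A B : Set ((F × F) × F))
    (hA : A ⊆ paraboloid3 F) (hB : B ⊆ paraboloid3 F) :
    (({q : (((F × F) × F) × ((F × F) × F)) × (((F × F) × F) × ((F × F) × F)) |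
        q.1.1 ∈ A ∧ q.1.2 ∈ B ∧ q.2.1 ∈ A ∧ q.2.2 ∈ B ∧
          q.1.1 + q.1.2 = q.2.1 + q.2.2}).ncard : ℝ) ≤
      2 * min ((A.ncard : ℝ) ^ ((1 : ℝ) / 2) * (B.ncard : ℝ) ^ 2 + (A.ncard : ℝ) * (B.ncard : ℝ))
          ((A.ncard : ℝ) * (B.ncard : ℝ) ^ ((3 : ℝ) / 2) + (B.ncard : ℝ) ^ 2) := by
  classical
  obtain ⟨A, rfl⟩ := A.toFinite.exists_finset_coe
  obtain ⟨B, rfl⟩ := B.toFinite.exists_finset_coe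
  have hR := c4FreeLinks_paraboloid3 hchar hsq hA hB
  rw [Set.ncard_coe_finset, Set.ncard_coe_finset]
  exact quadruple_bound_of_sq_le
    (ncard_addQuadruples_le fun a b d h ↦ hA (mem_coe.mpr h))
    (card_offDiagTriples_sq_le_fst hR) (card_offDiagTriples_sq_le_snd hR)
end
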